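/- Under the OSSE mechanism, for a single query the differential privacy loss for keywords is bounded by ε per differing document: if queries w and w' differ, and d = |D_{1,0}| + |D_{0,1}| is the number of documents containing exactly one of {w, w'}, then Pr(M(D,w)=a)/Pr(M(D,w')=a) ≤ ((1/(1-p))·((p+q(1-p))/q))^d for every output a. -/
import Mathlib


open Finset

/-- pmf of a geometric distribution on {0,1,2,...} with success parameter `1-q`. -/
noncomputable def geomPMF (q : ℝ) (k : ℕ) : ℝ := q ^ k * (1 - q)

/-- pmf of a Bernoulli distribution with parameter `p`. -/
noncomputable def bernPMF (p : ℝ) (k : ℕ) : ℝ :=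
  if k = 0 then 1 - p else if k = 1 then p else 0

/-- pmf of a Binomial(n, p) distribution. -/
noncomputable def binomPMF (n : ℕ) (p : ℝ) (k : ℕ) : ℝ :=
  (n.choose k : ℝ) * p ^ k * (1 - p) ^ (n - k)

/-- pmf of the sum of two independent random variables with pmfs `f` and `g`. -/
noncomputable def convPMF (f g : ℕ → ℝ) (α : ℕ) : ℝ :=
  ∑ k ∈ Finset.range (α + 1), f k * g (α - k)

/-- Per-document count distribution: Bernoulli(p) + Geom(1-q) if the document
contains the queried keyword, Geom(1-q) otherwise. -/
noncomputable def docDist (p q : ℝ) (m : Bool) (k : ℕ) : ℝ :=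
  if m then convPMF (bernPMF p) (geomPMF q) k else geomPMF q k

/-- Per-label non-match count distribution: Binomial(g, p) + Geom(1-q). -/
noncomputable def labelDist (p q : ℝ) (g : ℕ) (k : ℕ) : ℝ :=
  convPMF (binomPMF g p) (geomPMF q) k

/-- Joint density of the obfuscated access pattern for the query whose
membership function is `mem`. -/
noncomputable def mechDensity (p q : ℝ) (n L Cmax : ℕ) (label : Fin n → Fin L)
    (mem : Fin n → Bool) (a : (Fin n → ℕ) × (Fin L → ℕ)) : ℝ :=
  (∏ i, docDist p q (mem i) (a.1 i)) *
    ∏ l, labelDist p q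
      (Cmax - (Finset.univ.filter (fun i => label i = l ∧ mem i = true)).card) (a.2 l)

section Aux
variable {p q : ℝ}

lemma geom_pos (hq0 : 0 < q) (hq1 : q < 1) (k : ℕ) : 0 < geomPMF q k :=
  mul_pos (pow_pos hq0 _) (by linarith)

lemma binom_nonneg (hp0 : 0 ≤ p) (hp1 : p ≤ 1) (g j : ℕ) : 0 ≤ binomPMF g p j :=
  mul_nonneg (mul_nonneg (Nat.cast_nonneg _) (pow_nonneg hp0 _)) (pow_nonneg (by linarith) _)

lemma labelDist_nonneg (hp0 : 0 ≤ p) (hp1 : p ≤ 1) (hq0 : 0 < q) (hq1 : q < 1)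
    (g k : ℕ) : 0 ≤ labelDist p q g k := by
  unfold labelDist convPMF
  exact Finset.sum_nonneg fun j _ => mul_nonneg (binom_nonneg hp0 hp1 g j) (geom_pos hq0 hq1 _).le

lemma labelDist_pos (hp0 : 0 ≤ p) (hp1 : p < 1) (hq0 : 0 < q) (hq1 : q < 1)
    (g k : ℕ) : 0 < labelDist p q g k := by
  have h0 : (0:ℝ) < binomPMF g p 0 * geomPMF q (k - 0) := by
    have : binomPMF g p 0 = (1 - p) ^ g := by simp [binomPMF]
    rw [this]
    exact mul_pos (pow_pos (by linarith) _) (geom_pos hq0 hq1 _)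
  refine h0.trans_le ?_
  unfold labelDist convPMF
  exact Finset.single_le_sum
    (fun j _ => mul_nonneg (binom_nonneg hp0 hp1.le g j) (geom_pos hq0 hq1 _).le)
    (Finset.mem_range.mpr (by omega))

lemma labelDist_tail (hp0 : 0 ≤ p) (hp1 : p ≤ 1) (hq0 : 0 < q) (hq1 : q < 1)
    (g k : ℕ) : q * labelDist p q g k ≤ labelDist p q g (k + 1) := by
  have key : q * labelDist p q g k
      = ∑ j ∈ Finset.range (k + 1), binomPMF g p j * geomPMF q (k + 1 - j) := by
    rw [labelDist, convPMF, Finset.mul_sum]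
    refine Finset.sum_congr rfl fun j hj => ?_
    have hj' : j ≤ k := Nat.lt_succ_iff.mp (Finset.mem_range.mp hj)
    have h2 : k + 1 - j = (k - j) + 1 := by omega
    rw [h2]
    simp only [geomPMF, pow_succ]
    ring
  rw [key, labelDist, convPMF]
  refine Finset.sum_le_sum_of_subset_of_nonneg (Finset.range_subset_range.mpr (by omega))
    fun j _ _ => mul_nonneg (binom_nonneg hp0 hp1 g j) (geom_pos hq0 hq1 _).le

lemma conv_step (f f₀ H : ℕ → ℝ)
    (hf : ∀ j, f j = (1 - p) * f₀ j + p * (if j = 0 then 0 else f₀ (j - 1))) (k : ℕ) :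
    convPMF f H k = (1 - p) * convPMF f₀ H k
      + p * (if k = 0 then 0 else convPMF f₀ H (k - 1)) := by
  unfold convPMF
  simp_rw [hf, add_mul]
  rw [Finset.sum_add_distrib, Finset.mul_sum]
  congr 1
  · exact Finset.sum_congr rfl fun j _ => by ring
  · cases k with
    | zero => simp
    | succ m =>
      rw [Finset.sum_range_succ', if_neg (Nat.succ_ne_zero m)]
      have hterm : ∀ i, (p * (if i + 1 = 0 then 0 else f₀ (i + 1 - 1))) * H (m + 1 - (i + 1))
          = p * (f₀ i * H (m - i)) := by
        intro i
        rw [if_neg (Nat.succ_ne_zero i)]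
        simp only [Nat.add_sub_cancel, Nat.succ_sub_succ, Nat.sub_zero]
        ring
      rw [Finset.sum_congr rfl (fun i _ => hterm i), ← Finset.mul_sum]
      norm_num

lemma binom_rec (g : ℕ) (j : ℕ) :
    binomPMF (g + 1) p j
      = (1 - p) * binomPMF g p j + p * (if j = 0 then 0 else binomPMF g p (j - 1)) := by
  cases j with
  | zero => simp [binomPMF]; ring
  | succ i =>
    rw [if_neg (Nat.succ_ne_zero i)]
    simp only [binomPMF, Nat.add_sub_cancel, Nat.succ_sub_succ, Nat.sub_zero]
    rw [Nat.choose_succ_succ]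
    push_cast
    by_cases h : i + 1 ≤ g
    · have h2 : g - i = (g - (i + 1)) + 1 := by omega
      rw [h2, pow_succ, pow_succ]
      ring
    · have h3 : g.choose (i + 1) = 0 := Nat.choose_eq_zero_of_lt (by omega)
      rcases Nat.lt_or_ge g i with hgi | hgi
      · have h4 : g.choose i = 0 := Nat.choose_eq_zero_of_lt hgi
        simp [h3, h4]
      · have hgi' : g = i := by omega
        subst hgi'
        simp [h3, pow_succ, Nat.sub_self]
        ring

lemma labelDist_succ (g k : ℕ) :
    labelDist p q (g + 1) k = (1 - p) * labelDist p q g k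
      + p * (if k = 0 then 0 else labelDist p q g (k - 1)) :=
  conv_step _ _ _ (fun j => binom_rec g j) k

lemma labelDist_step_up (hp0 : 0 ≤ p) (hp1 : p ≤ 1) (hq0 : 0 < q) (hq1 : q < 1)
    (g k : ℕ) :
    labelDist p q (g + 1) k ≤ ((p + q * (1 - p)) / q) * labelDist p q g k := by
  rw [labelDist_succ, div_mul_eq_mul_div, le_div_iff₀ hq0]
  cases k with
  | zero =>
    have hL := labelDist_nonneg hp0 hp1 hq0 hq1 g 0
    rw [if_pos rfl, mul_zero, add_zero]
    nlinarith [mul_nonneg hp0 hL]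
  | succ m =>
    have htail := labelDist_tail hp0 hp1 hq0 hq1 g m
    have h2 := mul_le_mul_of_nonneg_left htail hp0
    rw [if_neg (Nat.succ_ne_zero m)]
    simp only [Nat.succ_sub_succ, Nat.sub_zero, Nat.add_sub_cancel]
    nlinarith [labelDist_nonneg hp0 hp1 hq0 hq1 g (m + 1)]

lemma labelDist_step_down (hp0 : 0 ≤ p) (hp1 : p < 1) (hq0 : 0 < q) (hq1 : q < 1)
    (g k : ℕ) :
    labelDist p q g k ≤ (1 / (1 - p)) * labelDist p q (g + 1) k := by
  rw [one_div_mul_eq_div, le_div_iff₀ (by linarith : (0:ℝ) < 1 - p), labelDist_succ]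
  have h1 : 0 ≤ p * (if k = 0 then 0 else labelDist p q g (k - 1)) := by
    split
    · simp
    · exact mul_nonneg hp0 (labelDist_nonneg hp0 hp1.le hq0 hq1 g _)
  linarith

lemma labelDist_pow_up (hp0 : 0 ≤ p) (hp1 : p ≤ 1) (hq0 : 0 < q) (hq1 : q < 1)
    (g e k : ℕ) :
    labelDist p q (g + e) k ≤ ((p + q * (1 - p)) / q) ^ e * labelDist p q g k := by
  induction e with
  | zero => simp
  | succ m ih =>
    have hK : 0 ≤ (p + q * (1 - p)) / q := by
      apply div_nonneg _ hq0.le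
      nlinarith [mul_nonneg hq0.le (by linarith : (0:ℝ) ≤ 1 - p)]
    calc labelDist p q (g + (m + 1)) k = labelDist p q ((g + m) + 1) k := by ring_nf
      _ ≤ ((p + q * (1 - p)) / q) * labelDist p q (g + m) k :=
          labelDist_step_up hp0 hp1 hq0 hq1 _ _
      _ ≤ ((p + q * (1 - p)) / q) * (((p + q * (1 - p)) / q) ^ m * labelDist p q g k) :=
          mul_le_mul_of_nonneg_left ih hK
      _ = ((p + q * (1 - p)) / q) ^ (m + 1) * labelDist p q g k := by ring

lemma labelDist_pow_down (hp0 : 0 ≤ p) (hp1 : p < 1) (hq0 : 0 < q) (hq1 : q < 1)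
    (g e k : ℕ) :
    labelDist p q g k ≤ (1 / (1 - p)) ^ e * labelDist p q (g + e) k := by
  induction e with
  | zero => simp
  | succ m ih =>
    have hK : 0 ≤ (1 / (1 - p)) ^ m := by
      have : (0:ℝ) < 1 - p := by linarith
      positivity
    calc labelDist p q g k ≤ (1 / (1 - p)) ^ m * labelDist p q (g + m) k := ih
      _ ≤ (1 / (1 - p)) ^ m * ((1 / (1 - p)) * labelDist p q ((g + m) + 1) k) :=
          mul_le_mul_of_nonneg_left (labelDist_step_down hp0 hp1 hq0 hq1 _ _) hK
      _ = (1 / (1 - p)) ^ (m + 1) * labelDist p q (g + (m + 1)) k := by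
          rw [show g + m + 1 = g + (m + 1) by ring]; ring

lemma labelDist_ratio (hp0 : 0 ≤ p) (hp1 : p < 1) (hq0 : 0 < q) (hq1 : q < 1)
    (g g' k : ℕ) :
    labelDist p q g k
      ≤ ((1 / (1 - p)) ^ (g' - g) * ((p + q * (1 - p)) / q) ^ (g - g'))
        * labelDist p q g' k := by
  rcases le_total g g' with h | h
  · have h0 : g - g' = 0 := by omega
    have h1 : g' = g + (g' - g) := by omega
    rw [h0, pow_zero, mul_one]
    calc labelDist p q g k ≤ (1 / (1 - p)) ^ (g' - g) * labelDist p q (g + (g' - g)) k :=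
          labelDist_pow_down hp0 hp1 hq0 hq1 g (g' - g) k
      _ = (1 / (1 - p)) ^ (g' - g) * labelDist p q g' k := by rw [← h1]
  · have h0 : g' - g = 0 := by omega
    have h1 : g = g' + (g - g') := by omega
    rw [h0, pow_zero, one_mul]
    calc labelDist p q g k = labelDist p q (g' + (g - g')) k := by rw [← h1]
      _ ≤ ((p + q * (1 - p)) / q) ^ (g - g') * labelDist p q g' k :=
          labelDist_pow_up hp0 hp1.le hq0 hq1 g' (g - g') k

lemma labelDist_zero' (k : ℕ) : labelDist p q 0 k = geomPMF q k := by
  rw [labelDist, convPMF]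
  rw [Finset.sum_eq_single 0]
  · simp [binomPMF]
  · intro j hj hj0
    have : (0:ℕ).choose j = 0 := Nat.choose_eq_zero_of_lt (by omega)
    simp [binomPMF, this]
  · simp

lemma docDist_eq_labelDist (m : Bool) (k : ℕ) :
    docDist p q m k = labelDist p q (cond m 1 0) k := by
  cases m with
  | false => simp [docDist, labelDist_zero']
  | true =>
    simp only [docDist, if_pos, cond]
    rw [labelDist, convPMF, convPMF]
    refine Finset.sum_congr rfl fun j _ => ?_
    congr 1
    match j with
    | 0 => simp [bernPMF, binomPMF]
    | 1 => simp [bernPMF, binomPMF]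
    | (i + 2) =>
      have : (1:ℕ).choose (i + 2) = 0 := Nat.choose_eq_zero_of_lt (by omega)
      simp [bernPMF, binomPMF, this]

end Aux

lemma fiber_card_le {n L : ℕ} (label : Fin n → Fin L) (m m' : Fin n → Bool) (l : Fin L) :
    (Finset.univ.filter (fun i => label i = l ∧ m i = true)).card
      ≤ (Finset.univ.filter (fun i => label i = l ∧ m' i = true)).card
        + (Finset.univ.filter (fun i => label i = l ∧ (m i = true ∧ m' i = false))).card := by
  refine le_trans (Finset.card_le_card ?_) (Finset.card_union_le _ _)
  intro i hi
  simp only [Finset.mem_filter, Finset.mem_union, Finset.mem_univ, true_and] at *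
  cases hw' : m' i
  · exact Or.inr ⟨hi.1, hi.2, rfl⟩
  · exact Or.inl ⟨hi.1, rfl⟩

lemma fiber_sum {n L : ℕ} (label : Fin n → Fin L) (P : Fin n → Prop) [DecidablePred P] :
    ∑ l : Fin L, (Finset.univ.filter (fun i => label i = l ∧ P i)).card
      = (Finset.univ.filter (fun i => P i)).card := by
  rw [Finset.card_eq_sum_card_fiberwise (f := label) (t := Finset.univ)
    (fun x _ => Finset.mem_univ _)]
  refine Finset.sum_congr rfl fun l _ => ?_
  rw [Finset.filter_filter]
  exact congrArg Finset.card (Finset.filter_congr fun i _ => by tauto)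

theorem osse_dp_for_keywords (p q : ℝ) (hp0 : 0 < p) (hp1 : p < 1)
    (hq0 : 0 < q) (hq1 : q < 1) (n L Cmax : ℕ) (label : Fin n → Fin L)
    (memW memW' : Fin n → Bool)
    (hcapW : ∀ l : Fin L,
      (Finset.univ.filter (fun i => label i = l ∧ memW i = true)).card ≤ Cmax)
    (hcapW' : ∀ l : Fin L,
      (Finset.univ.filter (fun i => label i = l ∧ memW' i = true)).card ≤ Cmax)
    (d : ℕ) (hd : d = (Finset.univ.filter (fun i => memW i ≠ memW' i)).card)
    (a : (Fin n → ℕ) × (Fin L → ℕ)) :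
    mechDensity p q n L Cmax label memW a / mechDensity p q n L Cmax label memW' a
      ≤ ((1 / (1 - p)) * ((p + q * (1 - p)) / q)) ^ d := by
  have hp1' : (0:ℝ) < 1 - p := by linarith
  set K1 : ℝ := 1 / (1 - p) with hK1def
  set K2 : ℝ := (p + q * (1 - p)) / q with hK2def
  have hK1 : (1:ℝ) ≤ K1 := by rw [hK1def, le_div_iff₀ hp1']; linarith
  have hK2 : (1:ℝ) ≤ K2 := by rw [hK2def, le_div_iff₀ hq0]; nlinarith
  have hK1nn : (0:ℝ) ≤ K1 := by linarith
  have hK2nn : (0:ℝ) ≤ K2 := by linarith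
  -- notation
  set cW : Fin L → ℕ :=
    fun l => (Finset.univ.filter (fun i => label i = l ∧ memW i = true)).card with hcWdef
  set cW' : Fin L → ℕ :=
    fun l => (Finset.univ.filter (fun i => label i = l ∧ memW' i = true)).card with hcW'def
  -- denominator positive
  have hden : 0 < mechDensity p q n L Cmax label memW' a := by
    unfold mechDensity
    apply mul_pos
    · exact Finset.prod_pos fun i _ => by
        rw [docDist_eq_labelDist]; exact labelDist_pos hp0.le hp1 hq0 hq1 _ _
    · exact Finset.prod_pos fun l _ => labelDist_pos hp0.le hp1 hq0 hq1 _ _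
  rw [div_le_iff₀ hden]
  -- exponents
  set A1 : ℕ := ∑ i, ((cond (memW' i) 1 0) - (cond (memW i) 1 0)) with hA1def
  set A2 : ℕ := ∑ i, ((cond (memW i) 1 0) - (cond (memW' i) 1 0)) with hA2def
  set B1 : ℕ := ∑ l, ((Cmax - cW' l) - (Cmax - cW l)) with hB1def
  set B2 : ℕ := ∑ l, ((Cmax - cW l) - (Cmax - cW' l)) with hB2def
  -- step 1: numerator ≤ K1^(A1+B1) * K2^(A2+B2) * denominator
  have hdocnn : ∀ i : Fin n, 0 ≤ docDist p q (memW i) (a.1 i) := fun i => by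
    rw [docDist_eq_labelDist]; exact labelDist_nonneg hp0.le hp1.le hq0 hq1 _ _
  have hdocnn' : ∀ i : Fin n, 0 ≤ docDist p q (memW' i) (a.1 i) := fun i => by
    rw [docDist_eq_labelDist]; exact labelDist_nonneg hp0.le hp1.le hq0 hq1 _ _
  have hprodDoc : ∏ i, docDist p q (memW i) (a.1 i)
      ≤ (K1 ^ A1 * K2 ^ A2) * ∏ i, docDist p q (memW' i) (a.1 i) := by
    calc ∏ i, docDist p q (memW i) (a.1 i)
        ≤ ∏ i, ((K1 ^ ((cond (memW' i) 1 0) - (cond (memW i) 1 0))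
              * K2 ^ ((cond (memW i) 1 0) - (cond (memW' i) 1 0)))
            * docDist p q (memW' i) (a.1 i)) := by
          refine Finset.prod_le_prod (fun i _ => hdocnn i) (fun i _ => ?_)
          rw [docDist_eq_labelDist, docDist_eq_labelDist]
          exact labelDist_ratio hp0.le hp1 hq0 hq1 _ _ _
      _ = (K1 ^ A1 * K2 ^ A2) * ∏ i, docDist p q (memW' i) (a.1 i) := by
          rw [Finset.prod_mul_distrib, Finset.prod_mul_distrib,
            Finset.prod_pow_eq_pow_sum, Finset.prod_pow_eq_pow_sum, hA1def, hA2def]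
  have hprodLab : ∏ l, labelDist p q (Cmax - cW l) (a.2 l)
      ≤ (K1 ^ B1 * K2 ^ B2) * ∏ l, labelDist p q (Cmax - cW' l) (a.2 l) := by
    calc ∏ l, labelDist p q (Cmax - cW l) (a.2 l)
        ≤ ∏ l, ((K1 ^ ((Cmax - cW' l) - (Cmax - cW l))
              * K2 ^ ((Cmax - cW l) - (Cmax - cW' l)))
            * labelDist p q (Cmax - cW' l) (a.2 l)) := by
          refine Finset.prod_le_prod
            (fun l _ => labelDist_nonneg hp0.le hp1.le hq0 hq1 _ _) (fun l _ => ?_)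
          exact labelDist_ratio hp0.le hp1 hq0 hq1 _ _ _
      _ = (K1 ^ B1 * K2 ^ B2) * ∏ l, labelDist p q (Cmax - cW' l) (a.2 l) := by
          rw [Finset.prod_mul_distrib, Finset.prod_mul_distrib,
            Finset.prod_pow_eq_pow_sum, Finset.prod_pow_eq_pow_sum, hB1def, hB2def]
  have hnum : mechDensity p q n L Cmax label memW a
      ≤ (K1 ^ (A1 + B1) * K2 ^ (A2 + B2)) * mechDensity p q n L Cmax label memW' a := by
    unfold mechDensity
    calc (∏ i, docDist p q (memW i) (a.1 i)) * ∏ l, labelDist p q (Cmax - cW l) (a.2 l)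
        ≤ ((K1 ^ A1 * K2 ^ A2) * ∏ i, docDist p q (memW' i) (a.1 i))
            * ((K1 ^ B1 * K2 ^ B2) * ∏ l, labelDist p q (Cmax - cW' l) (a.2 l)) := by
          refine mul_le_mul hprodDoc hprodLab
            (Finset.prod_nonneg fun l _ => labelDist_nonneg hp0.le hp1.le hq0 hq1 _ _)
            (mul_nonneg (mul_nonneg (pow_nonneg hK1nn _) (pow_nonneg hK2nn _))
              (Finset.prod_nonneg fun i _ => hdocnn' i))
      _ = (K1 ^ (A1 + B1) * K2 ^ (A2 + B2))
            * ((∏ i, docDist p q (memW' i) (a.1 i))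
              * ∏ l, labelDist p q (Cmax - cW' l) (a.2 l)) := by
          rw [pow_add, pow_add]; ring
  -- step 2: exponent bounds
  set u : ℕ := (Finset.univ.filter (fun i => memW i = true ∧ memW' i = false)).card with hudef
  set v : ℕ := (Finset.univ.filter (fun i => memW' i = true ∧ memW i = false)).card with hvdef
  have hA1v : A1 = v := by
    rw [hA1def, hvdef, Finset.card_filter]
    exact Finset.sum_congr rfl fun i _ => by
      cases hw : memW i <;> cases hw' : memW' i <;> simp [hw, hw']
  have hA2u : A2 = u := by
    rw [hA2def, hudef, Finset.card_filter]
    exact Finset.sum_congr rfl fun i _ => by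
      cases hw : memW i <;> cases hw' : memW' i <;> simp [hw, hw']
  have hB1u : B1 ≤ u := by
    rw [hB1def, hudef]
    calc ∑ l, ((Cmax - cW' l) - (Cmax - cW l))
        ≤ ∑ l, (Finset.univ.filter
            (fun i => label i = l ∧ (memW i = true ∧ memW' i = false))).card := by
          refine Finset.sum_le_sum fun l _ => ?_
          have h1 := hcapW l
          have h2 := hcapW' l
          have h3 := fiber_card_le label memW memW' l
          rw [hcWdef, hcW'def]
          simp only
          omega
      _ = (Finset.univ.filter (fun i => memW i = true ∧ memW' i = false)).card :=
          fiber_sum label _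
  have hB2v : B2 ≤ v := by
    rw [hB2def, hvdef]
    calc ∑ l, ((Cmax - cW l) - (Cmax - cW' l))
        ≤ ∑ l, (Finset.univ.filter
            (fun i => label i = l ∧ (memW' i = true ∧ memW i = false))).card := by
          refine Finset.sum_le_sum fun l _ => ?_
          have h1 := hcapW l
          have h2 := hcapW' l
          have h3 := fiber_card_le label memW' memW l
          rw [hcWdef, hcW'def]
          simp only
          omega
      _ = (Finset.univ.filter (fun i => memW' i = true ∧ memW i = false)).card :=
          fiber_sum label _
  have huv : u + v = d := by
    rw [hd, hudef, hvdef, Finset.card_filter, Finset.card_filter, Finset.card_filter,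
      ← Finset.sum_add_distrib]
    exact Finset.sum_congr rfl fun i _ => by
      cases hw : memW i <;> cases hw' : memW' i <;> simp [hw, hw']
  have hS1 : A1 + B1 ≤ d := by omega
  have hS2 : A2 + B2 ≤ d := by omega
  -- conclude
  have hKd : K1 ^ (A1 + B1) * K2 ^ (A2 + B2) ≤ (K1 * K2) ^ d := by
    rw [mul_pow]
    exact mul_le_mul (pow_le_pow_right₀ hK1 hS1) (pow_le_pow_right₀ hK2 hS2)
      (pow_nonneg hK2nn _) (pow_nonneg (by linarith : (0:ℝ) ≤ K1) _)
  calc mechDensity p q n L Cmax label memW a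
      ≤ (K1 ^ (A1 + B1) * K2 ^ (A2 + B2)) * mechDensity p q n L Cmax label memW' a := hnum
    _ ≤ (K1 * K2) ^ d * mechDensity p q n L Cmax label memW' a :=
        mul_le_mul_of_nonneg_right hKd hden.le
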